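/- Let G be a commutative group, X ⊆ G a nonempty finite subset, Σ ⊆ G a finite subset, and C₁, C₂ natural numbers. If N_u ≤ C₁ for every u ∈ G with u ∉ Σ, and |Σ| ≤ C₂, then |X|^2 ≤ (C₁^2 + C₂) · |X+X|. -/

import Mathlib

open Finset Pointwise

/-- The additive energy `E(X) := #{(a,b,c,d) ∈ X⁴ : a + b = c + d}`. -/
def addEnergy' {G : Type*} [AddCommGroup G] [DecidableEq G] (X : Finset G) : ℕ :=
  (((X ×ˢ X) ×ˢ X ×ˢ X).filter fun p => p.1.1 + p.1.2 = p.2.1 + p.2.2).card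

/-- The representation count `N_u := #{(a,b) ∈ X² : a + b = u}`. -/
def repCount {G : Type*} [AddCommGroup G] [DecidableEq G] (X : Finset G) (u : G) : ℕ :=
  ((X ×ˢ X).filter fun p => p.1 + p.2 = u).card

/-! Counting the pairs of `X × X` according to their sum gives `#X ^ 2`; a pair with prescribed sum
is determined by its first coordinate, whence `N_u ≤ #X`. Splitting the sum over `X + X` at `Σ`
bounds `#X ^ 2` by `C₁ · #(X + X) + #Σ · #X`, and `#X ≤ #(X + X)`. -/

namespace Finset

theorem sum_le_card_nsmul_add_card_nsmul {ι M : Type*} [DecidableEq ι] [AddCommMonoid M]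
    [PartialOrder M] [IsOrderedAddMonoid M] [CanonicallyOrderedAdd M]
    (s S : Finset ι) (f : ι → M) {a b : M}
    (ha : ∀ i ∈ s, i ∉ S → f i ≤ a) (hb : ∀ i ∈ s, f i ≤ b) :
    ∑ i ∈ s, f i ≤ #s • a + #S • b := by
  rw [← sum_filter_add_sum_filter_not s (· ∈ S), add_comm]
  gcongr
  · calc ∑ i ∈ s with i ∉ S, f i ≤ #{i ∈ s | i ∉ S} • a :=
          sum_le_card_nsmul _ _ _ fun i hi => ha i (mem_filter.1 hi).1 (mem_filter.1 hi).2
      _ ≤ #s • a := nsmul_le_nsmul_left zero_le (card_filter_le _ _)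
  · calc ∑ i ∈ s with i ∈ S, f i ≤ #{i ∈ s | i ∈ S} • b :=
          sum_le_card_nsmul _ _ _ fun i hi => hb i (mem_filter.1 hi).1
      _ ≤ #S • b := nsmul_le_nsmul_left zero_le (card_le_card fun i hi => (mem_filter.1 hi).2)

end Finset

section RepCount

variable {G : Type*} [AddCommGroup G] [DecidableEq G]

theorem repCount_le_card (X : Finset G) (u : G) : repCount X u ≤ #X := by
  refine card_le_card_of_injOn Prod.fst (fun p hp => (mem_product.1 (mem_filter.1 hp).1).1) ?_
  intro p hp q hq hpq
  have hsum : p.1 + p.2 = q.1 + q.2 := (mem_filter.1 hp).2.trans (mem_filter.1 hq).2.symm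
  rw [show p.1 = q.1 from hpq] at hsum
  exact Prod.ext hpq (add_left_cancel hsum)

theorem sum_repCount_add_self (X : Finset G) : ∑ u ∈ X + X, repCount X u = #X ^ 2 := by
  rw [sq, ← card_product]
  exact (card_eq_sum_card_fiberwise fun p hp =>
    add_mem_add (mem_product.1 hp).1 (mem_product.1 hp).2).symm

end RepCount

theorem sq_card_le_mul_card_sumset_general
    {G : Type*} [AddCommGroup G] [DecidableEq G]
    (X : Finset G) (Sig : Finset G) (C₁ C₂ : ℕ)
    (h : ∀ u : G, u ∉ Sig → repCount X u ≤ C₁) (hSig : Sig.card ≤ C₂) :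
    X.card ^ 2 ≤ (C₁ ^ 2 + C₂) * (X + X).card := by
  have hcard : #X ≤ #(X + X) := card_le_card_add_self
  calc #X ^ 2 = ∑ u ∈ X + X, repCount X u := (sum_repCount_add_self X).symm
    _ ≤ #(X + X) • C₁ + #Sig • #X :=
      sum_le_card_nsmul_add_card_nsmul _ _ _ (fun u _ hu => h u hu)
        (fun u _ => repCount_le_card X u)
    _ ≤ #(X + X) * C₁ ^ 2 + C₂ * #(X + X) := by
      simp only [smul_eq_mul]
      gcongr
      exact Nat.le_self_pow two_ne_zero C₁
    _ = (C₁ ^ 2 + C₂) * #(X + X) := by ring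

theorem sq_card_le_mul_card_sumset
    {G : Type*} [AddCommGroup G] [DecidableEq G]
    (X : Finset G) (hX : X.Nonempty) (Sig : Finset G) (C₁ C₂ : ℕ)
    (h : ∀ u : G, u ∉ Sig → repCount X u ≤ C₁) (hSig : Sig.card ≤ C₂) :
    X.card ^ 2 ≤ (C₁ ^ 2 + C₂) * (X + X).card :=
  sq_card_le_mul_card_sumset_general X Sig C₁ C₂ h hSig
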